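/- Let x be a two-dimensional observable on the k-perfect MV-algebra M = Γ(ℤ ⋉ G,(k,0)) and let F = F_x. If (s_1,t_1) and (s_2,t_2) belong to T_i for some i ≥ 1 and (s_1,t_1) is not equivalent to (s_2,t_2) (i.e., π_i(s_1,t_1) ≠ π_i(s_2,t_2)), then s_1 ≠ s_2, t_1 ≠ t_2, and s_1 < s_2 if and only if t_1 > t_2. -/

import Mathlib

open Function Set

/-- A partially ordered set is Dedekind σ-complete if every monotone increasing
sequence bounded above has a supremum. -/
def DedekindSigmaComplete (G : Type*) [Preorder G] : Prop :=
  ∀ f : ℕ → G, Monotone f → BddAbove (Set.range f) → ∃ g, IsLUB (Set.range f) g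

section Lexi

variable {H : Type*} [AddCommGroup H] [LinearOrder H] [IsOrderedAddMonoid H]
variable {G : Type*} [AddCommGroup G] [Lattice G] [CovariantClass G G (· + ·) (· ≤ ·)]

/-- `u` is a strong unit of `H`. -/
def IsStrongUnit (u : H) : Prop := ∀ h : H, ∃ n : ℕ, 0 < n ∧ h ≤ n • u

/-- The underlying set of the lexicographic MV-algebra `Γ(H ⋉ G, (u,0))`. -/
def MSet (u : H) : Set (H ×ₗ G) := Set.Icc (toLex ((0 : H), (0 : G))) (toLex (u, (0 : G)))

/-- `M_h`: the elements of `M` whose first coordinate is `h`. -/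
def MLevel (u h : H) : Set (H ×ₗ G) := {z ∈ MSet (G := G) u | (ofLex z).1 = h}

/-- A sequence of elements of `M` is summable if all its finite partial sums lie in `M`. -/
def SummableSeq (u : H) (a : ℕ → H ×ₗ G) : Prop := ∀ F : Finset ℕ, ∑ m ∈ F, a m ∈ MSet u

/-- `x` is an `n`-dimensional observable on `Γ(H ⋉ G, (u,0))`. -/
def IsObservable (u : H) (n : ℕ) (x : Set (Fin n → ℝ) → H ×ₗ G) : Prop :=
  (∀ A : Set (Fin n → ℝ), MeasurableSet A → x A ∈ MSet u) ∧
  x Set.univ = toLex (u, (0 : G)) ∧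
  ∀ A : ℕ → Set (Fin n → ℝ), (∀ m, MeasurableSet (A m)) → Pairwise (Disjoint on A) →
    (∀ F : Finset ℕ, ∑ m ∈ F, x (A m) ∈ MSet u) ∧
    IsLUB {y | ∃ F : Finset ℕ, y = ∑ m ∈ F, x (A m)} (x (⋃ m, A m))

/-- The spectral resolution `F_x` of an observable `x`. -/
def specRes {n : ℕ} (x : Set (Fin n → ℝ) → H ×ₗ G) : (Fin n → ℝ) → H ×ₗ G :=
  fun t => x {s | ∀ i, s i < t i}

/-- The increment `V(F,[a,b))`. -/
def boxSum {n : ℕ} (F : (Fin n → ℝ) → H ×ₗ G) (a b : Fin n → ℝ) : H ×ₗ G :=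
  ∑ S : Finset (Fin n), ((-1 : ℤ) ^ (n - S.card)) • F (fun i => if i ∈ S then b i else a i)

/-- `F` is an `n`-dimensional spectral resolution on `Γ(H ⋉ G, (u,0))`. -/
def IsSpectralResolution (u : H) (n : ℕ) (F : (Fin n → ℝ) → H ×ₗ G) : Prop :=
  Monotone F ∧
  IsLUB (Set.range F) (toLex (u, (0 : G))) ∧
  (∀ t : Fin n → ℝ, IsLUB {y | ∃ s : Fin n → ℝ, (∀ i, s i < t i) ∧ y = F s} (F t)) ∧
  (∀ (i : Fin n) (s : Fin n → ℝ),
      IsGLB {y | ∃ r : ℝ, y = F (Function.update s i r)} (toLex ((0 : H), (0 : G)))) ∧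
  (∀ a b : Fin n → ℝ, a ≤ b →
      toLex ((0 : H), (0 : G)) ≤ boxSum F a b ∧ boxSum F a b ≤ toLex (u, (0 : G)))

/-- `T_h = {s ∈ ℝⁿ : F s ∈ M_h}`. -/
def TSet (u : H) {n : ℕ} (F : (Fin n → ℝ) → H ×ₗ G) (h : H) : Set (Fin n → ℝ) :=
  {s | F s ∈ MLevel u h}

/-- The projection `π_j^h(s)`. -/
noncomputable def proj (u : H) {n : ℕ} (F : (Fin n → ℝ) → H ×ₗ G) (h : H)
    (s : Fin n → ℝ) (j : Fin n) : ℝ :=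
  sInf {r : ℝ | Function.update s j r ∈ TSet u F h}

/-- The characteristic point `π_h(s)` associated to `s ∈ T_h`. -/
noncomputable def charPt (u : H) {n : ℕ} (F : (Fin n → ℝ) → H ×ₗ G) (h : H)
    (s : Fin n → ℝ) : Fin n → ℝ :=
  fun j => proj u F h s j

/-- The set of characteristic points of `T_h`. -/
def charPts (u : H) {n : ℕ} (F : (Fin n → ℝ) → H ×ₗ G) (h : H) : Set (Fin n → ℝ) :=
  charPt u F h '' TSet u F h

/-- The set of all characteristic points of `F`. -/
def charPoints (u : H) {n : ℕ} (F : (Fin n → ℝ) → H ×ₗ G) : Set (Fin n → ℝ) :=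
  {p | ∃ h : H, 0 < h ∧ h ≤ u ∧ p ∈ charPts u F h}

/-- A block of some `T_h`, `0 < h ≤ u`. -/
def IsBlock (u : H) {n : ℕ} (F : (Fin n → ℝ) → H ×ₗ G) (C : Set (Fin n → ℝ)) : Prop :=
  ∃ h : H, 0 < h ∧ h ≤ u ∧ ∃ s ∈ TSet u F h,
    C = {t ∈ TSet u F h | charPt u F h t = charPt u F h s}

/-- A `T_0`-adjoined block. -/
def IsT0AdjBlock (u : H) {n : ℕ} (F : (Fin n → ℝ) → H ×ₗ G) (C : Set (Fin n → ℝ)) : Prop :=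
  ∃ h : H, 0 < h ∧ h ≤ u ∧ (∃ s ∈ TSet u F h,
    C = {t ∈ TSet u F h | charPt u F h t = charPt u F h s}) ∧
    ∀ t ∈ C, ∀ j : Fin n, Function.update t j (proj u F h t j) ∈ TSet u F 0

end Lexi

/-! If `a ≤ b` both lie in `T_i`, so does every point between them. For `r ≤ b j`, additivity
of `x` bounds the increase of the level of `F` from `update a j r` to `update b j r` by its
increase from `update a j (b j)` to `b`, which is `0`. So the `j`-th lines of `T_i` through `a`
and through `b` agree below `b j`, and `π_i a = π_i b`. Two points of `T_i` with different
characteristic points are therefore incomparable coordinatewise, which in the plane is the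
claim. -/

-- gives `H ×ₗ G` its ordered-monoid structure through `Prod.Lex.isOrderedAddMonoid`
instance {G : Type*} [AddCommGroup G] [Lattice G] [CovariantClass G G (· + ·) (· ≤ ·)] :
    IsOrderedAddMonoid G where
  add_le_add_left _ _ h c := by simpa only [add_comm _ c] using add_le_add_left h c

theorem csInf_inter_Iic_of_mem {α : Type*} [ConditionallyCompleteLinearOrder α] {s : Set α}
    {c : α} (hc : c ∈ s) : sInf (s ∩ Iic c) = sInf s := by
  by_cases hs : BddBelow s
  · exact ((isGLB_csInf ⟨c, hc⟩ hs).inter_Iic_of_mem hc).csInf_eq ⟨c, hc, le_rfl⟩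
  · have hs' : ¬BddBelow (s ∩ Iic c) := fun hbdd => hs <| by
      refine (hbdd.union (bddBelow_Ioi (a := c))).mono fun r hr => ?_
      rcases le_or_gt r c with h | h
      exacts [Or.inl ⟨hr, h⟩, Or.inr h]
    rw [csInf_of_not_bddBelow hs, csInf_of_not_bddBelow hs']

theorem ne_and_ne_and_lt_iff_of_incomparable {α β : Type*} [LinearOrder α] [LinearOrder β]
    {a c : α} {b d : β} (h : ¬(a ≤ c ∧ b ≤ d)) (h' : ¬(c ≤ a ∧ d ≤ b)) :
    a ≠ c ∧ b ≠ d ∧ (a < c ↔ d < b) := by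
  grind

theorem measurableSet_quadrant {n : ℕ} (t : Fin n → ℝ) :
    MeasurableSet {s : Fin n → ℝ | ∀ i, s i < t i} := by
  simp_rw [ofPred_forall]
  exact .iInter fun i => measurableSet_lt (measurable_pi_apply i) measurable_const

theorem monotone_quadrant {n : ℕ} :
    Monotone fun t : Fin n → ℝ => {s : Fin n → ℝ | ∀ i, s i < t i} :=
  fun _ _ hab _ hs i => (hs i).trans_le (hab i)

theorem quadrant_update_diff_subset {n : ℕ} {a b : Fin n → ℝ} (j : Fin n) {r : ℝ}
    (hr : r ≤ b j) :
    {s : Fin n → ℝ | ∀ i, s i < update b j r i} \ {s | ∀ i, s i < update a j r i} ⊆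
      {s | ∀ i, s i < b i} \ {s | ∀ i, s i < update a j (b j) i} := by
  rintro s ⟨hsb, hsa⟩
  refine ⟨fun i => ?_, fun hs => hsa fun i => ?_⟩
  · rcases eq_or_ne i j with rfl | hij
    · exact (by simpa using hsb i : s i < r).trans_le hr
    · simpa [hij] using hsb i
  · rcases eq_or_ne i j with rfl | hij
    · simpa using hsb i
    · simpa [hij] using hs i

section

variable {H : Type*} [AddCommGroup H] [LinearOrder H] {G : Type*} [AddCommGroup G] [Lattice G]
variable {u : H} {n : ℕ} {x : Set (Fin n → ℝ) → H ×ₗ G}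

namespace IsObservable

theorem nonneg (hx : IsObservable u n x) {A : Set (Fin n → ℝ)} (hA : MeasurableSet A) :
    0 ≤ x A :=
  (hx.1 A hA).1

theorem mem_TSet_specRes_iff (hx : IsObservable u n x) {h : H} {t : Fin n → ℝ} :
    t ∈ TSet u (specRes x) h ↔ (ofLex (specRes x t)).1 = h :=
  and_iff_right (hx.1 _ (measurableSet_quadrant t))

variable [IsOrderedAddMonoid H] [CovariantClass G G (· + ·) (· ≤ ·)]

theorem map_empty (hx : IsObservable u n x) : x ∅ = 0 := by
  have hlub := (hx.2.2 (fun _ => ∅) (fun _ => .empty) fun _ _ _ => disjoint_empty _).2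
  rw [iUnion_empty] at hlub
  have hdouble : x ∅ + x ∅ ≤ x ∅ :=
    hlub.1 ⟨{0, 1}, (Finset.sum_pair (f := fun _ => x ∅) zero_ne_one).symm⟩
  exact le_antisymm (add_le_iff_nonpos_left.mp hdouble) (hx.nonneg .empty)

theorem map_iUnion_eq_sum (hx : IsObservable u n x) {A : ℕ → Set (Fin n → ℝ)}
    (hA : ∀ m, MeasurableSet (A m)) (hd : Pairwise (Disjoint on A)) {s : Finset ℕ}
    (hs : ∀ m ∉ s, x (A m) = 0) : x (⋃ m, A m) = ∑ m ∈ s, x (A m) := by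
  refine (hx.2.2 A hA hd).2.unique (IsGreatest.isLUB ⟨⟨s, rfl⟩, ?_⟩)
  rintro _ ⟨F, rfl⟩
  calc ∑ m ∈ F, x (A m) ≤ ∑ m ∈ F ∪ s, x (A m) :=
        Finset.sum_le_sum_of_subset_of_nonneg Finset.subset_union_left
          fun m _ _ => hx.nonneg (hA m)
    _ = ∑ m ∈ s, x (A m) :=
        (Finset.sum_subset Finset.subset_union_right fun m _ hm => hs m hm).symm

theorem map_union (hx : IsObservable u n x) {U V : Set (Fin n → ℝ)} (hU : MeasurableSet U)
    (hV : MeasurableSet V) (hUV : Disjoint U V) : x (U ∪ V) = x U + x V := by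
  set A : ℕ → Set (Fin n → ℝ) := fun m => if m = 0 then U else if m = 1 then V else ∅ with hA
  have hmeas : ∀ m, MeasurableSet (A m) := by
    intro m
    simp only [hA]
    split_ifs
    exacts [hU, hV, .empty]
  have hd : Pairwise (Disjoint on A) := by
    intro m m' hmm'
    simp only [onFun, hA]
    split_ifs <;> simp_all [hUV.symm]
  have hunion : ⋃ m, A m = U ∪ V := by
    ext p
    simp only [hA, mem_iUnion, mem_union]
    constructor
    · rintro ⟨m, hm⟩
      split_ifs at hm <;> simp_all
    · rintro (hp | hp)
      exacts [⟨0, by simpa using hp⟩, ⟨1, by simpa using hp⟩]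
  have hsum := hx.map_iUnion_eq_sum hmeas hd (s := {0, 1}) fun m hm => by
    simp only [Finset.mem_insert, Finset.mem_singleton, not_or] at hm
    simp [hA, hm.1, hm.2, hx.map_empty]
  rw [hunion] at hsum
  simpa [hA] using hsum

theorem map_diff (hx : IsObservable u n x) {A B : Set (Fin n → ℝ)} (hA : MeasurableSet A)
    (hB : MeasurableSet B) (hAB : A ⊆ B) : x (B \ A) = x B - x A := by
  rw [eq_sub_iff_add_eq', ← hx.map_union hA (hB.diff hA) disjoint_sdiff_right,
    union_sdiff_cancel hAB]

theorem mono (hx : IsObservable u n x) {A B : Set (Fin n → ℝ)} (hA : MeasurableSet A)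
    (hB : MeasurableSet B) (hAB : A ⊆ B) : x A ≤ x B :=
  sub_nonneg.mp (hx.map_diff hA hB hAB ▸ hx.nonneg (hB.diff hA))

theorem specRes_mono (hx : IsObservable u n x) : Monotone (specRes x) := fun a b hab =>
  hx.mono (measurableSet_quadrant a) (measurableSet_quadrant b) (monotone_quadrant hab)

theorem ordConnected_TSet_specRes (hx : IsObservable u n x) (h : H) :
    (TSet u (specRes x) h).OrdConnected :=
  ⟨fun _ ha _ hb _ hc => hx.mem_TSet_specRes_iff.2 <| le_antisymm
    (hx.mem_TSet_specRes_iff.1 hb ▸ Prod.Lex.monotone_fst_ofLex (hx.specRes_mono hc.2))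
    (hx.mem_TSet_specRes_iff.1 ha ▸ Prod.Lex.monotone_fst_ofLex (hx.specRes_mono hc.1))⟩

theorem update_mem_TSet_specRes (hx : IsObservable u n x) {h : H} {a b : Fin n → ℝ}
    (ha : a ∈ TSet u (specRes x) h) (hb : b ∈ TSet u (specRes x) h) (hab : a ≤ b) (j : Fin n) :
    update a j (b j) ∈ TSet u (specRes x) h :=
  (hx.ordConnected_TSet_specRes h).out ha hb
    ⟨le_update_iff.2 ⟨hab j, fun _ _ => le_rfl⟩, update_le_iff.2 ⟨le_rfl, fun i _ => hab i⟩⟩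

theorem update_mem_TSet_specRes_iff (hx : IsObservable u n x) {h : H} {a b : Fin n → ℝ}
    (ha : a ∈ TSet u (specRes x) h) (hb : b ∈ TSet u (specRes x) h) (hab : a ≤ b) (j : Fin n)
    {r : ℝ} (hr : r ≤ b j) :
    update a j r ∈ TSet u (specRes x) h ↔ update b j r ∈ TSet u (specRes x) h := by
  have hmid := hx.update_mem_TSet_specRes ha hb hab j
  have hupdate : update a j r ≤ update b j r := update_le_update_iff.2 ⟨le_rfl, fun i _ => hab i⟩
  rw [hx.mem_TSet_specRes_iff] at ha hb hmid
  have hinc : specRes x (update b j r) - specRes x (update a j r) ≤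
      specRes x b - specRes x (update a j (b j)) := by
    simp only [specRes]
    rw [← hx.map_diff (measurableSet_quadrant _) (measurableSet_quadrant _)
        (monotone_quadrant hupdate),
      ← hx.map_diff (measurableSet_quadrant _) (measurableSet_quadrant _)
        (monotone_quadrant (update_le_iff.2 ⟨le_rfl, fun i _ => hab i⟩))]
    exact hx.mono ((measurableSet_quadrant _).diff (measurableSet_quadrant _))
      ((measurableSet_quadrant _).diff (measurableSet_quadrant _))
      (quadrant_update_diff_subset j hr)
  have hlevel : (ofLex (specRes x (update a j r))).1 = (ofLex (specRes x (update b j r))).1 := by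
    refine le_antisymm (Prod.Lex.monotone_fst_ofLex (hx.specRes_mono hupdate)) ?_
    have hfst := Prod.Lex.monotone_fst_ofLex hinc
    simpa only [ofLex_sub, Prod.fst_sub, hb, hmid, sub_self, sub_nonpos] using hfst
  rw [hx.mem_TSet_specRes_iff, hx.mem_TSet_specRes_iff, hlevel]

theorem charPt_specRes_eq_of_le (hx : IsObservable u n x) {h : H} {a b : Fin n → ℝ}
    (ha : a ∈ TSet u (specRes x) h) (hb : b ∈ TSet u (specRes x) h) (hab : a ≤ b) :
    charPt u (specRes x) h a = charPt u (specRes x) h b := by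
  funext j
  have ha' : b j ∈ {r | update a j r ∈ TSet u (specRes x) h} :=
    hx.update_mem_TSet_specRes ha hb hab j
  have hb' : b j ∈ {r | update b j r ∈ TSet u (specRes x) h} := by simpa using hb
  have hagree : {r | update a j r ∈ TSet u (specRes x) h} ∩ Iic (b j) =
      {r | update b j r ∈ TSet u (specRes x) h} ∩ Iic (b j) := by
    ext r
    exact and_congr_left fun hr => hx.update_mem_TSet_specRes_iff ha hb hab j hr
  simp only [charPt, proj]
  rw [← csInf_inter_Iic_of_mem ha', ← csInf_inter_Iic_of_mem hb', hagree]

end IsObservable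

end

theorem stmt_12_general {G : Type*}
    [AddCommGroup G] [Lattice G] [CovariantClass G G (· + ·) (· ≤ ·)]
    (k : ℕ)
    (x : Set (Fin 2 → ℝ) → ℤ ×ₗ G) (hx : IsObservable (k : ℤ) 2 x)
    (i : ℤ)
    (s1 t1 s2 t2 : ℝ)
    (h1 : ![s1, t1] ∈ TSet (k : ℤ) (specRes x) i)
    (h2 : ![s2, t2] ∈ TSet (k : ℤ) (specRes x) i)
    (hne : charPt (k : ℤ) (specRes x) i ![s1, t1] ≠ charPt (k : ℤ) (specRes x) i ![s2, t2]) :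
    s1 ≠ s2 ∧ t1 ≠ t2 ∧ (s1 < s2 ↔ t2 < t1) := by
  refine ne_and_ne_and_lt_iff_of_incomparable (fun hle => hne ?_) (fun hle => hne ?_)
  · exact hx.charPt_specRes_eq_of_le h1 h2 (Pi.le_def.2 (Fin.forall_fin_two.2 hle))
  · exact (hx.charPt_specRes_eq_of_le h2 h1 (Pi.le_def.2 (Fin.forall_fin_two.2 hle))).symm

theorem stmt_12 {G : Type*}
    [AddCommGroup G] [Lattice G] [CovariantClass G G (· + ·) (· ≤ ·)]
    (hG : DedekindSigmaComplete G) (k : ℕ) (hk : 1 ≤ k)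
    (x : Set (Fin 2 → ℝ) → ℤ ×ₗ G) (hx : IsObservable (k : ℤ) 2 x)
    (i : ℤ) (hi1 : 1 ≤ i) (hik : i ≤ (k : ℤ))
    (s1 t1 s2 t2 : ℝ)
    (h1 : ![s1, t1] ∈ TSet (k : ℤ) (specRes x) i)
    (h2 : ![s2, t2] ∈ TSet (k : ℤ) (specRes x) i)
    (hne : charPt (k : ℤ) (specRes x) i ![s1, t1] ≠ charPt (k : ℤ) (specRes x) i ![s2, t2]) :
    s1 ≠ s2 ∧ t1 ≠ t2 ∧ (s1 < s2 ↔ t2 < t1) :=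
  stmt_12_general k x hx i s1 t1 s2 t2 h1 h2 hne
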